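/- arXiv:1609.06494 — 4 statements merged into one kernel-verified Lean document; each statement's English description precedes it below -/
import Mathlib

section
/- Let C : ℝ^d → V be an invertible linear map to an inner product space V, and suppose there exist subspaces H_s, H_u with V = H_s ⊕ H_u such that C⁻¹ maps H_s and H_u to orthogonal subspaces of ℝ^d and |C⁻¹ η| ≥ √2 |η| for all η ∈ H_s ∪ H_u. If η_s ∈ H_s, η_u ∈ H_u are unit vectors with cos ∠(η_s, η_u) ≥ 0, then setting ζ := (η_s − η_u)/|η_s − η_u| one has |C⁻¹ ζ|² ≥ 1/ sin² ∠(η_s, η_u). In particular ‖C⁻¹‖ ≥ 1/ sin ∠(H_s, H_u). -/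
open scoped RealInnerProductSpace

noncomputable def minAngle {V : Type*} [NormedAddCommGroup V] [InnerProductSpace ℝ V]
    (Hs Hu : Submodule ℝ V) : ℝ :=
  sInf {θ : ℝ | ∃ ηs, ηs ∈ Hs ∧ ηs ≠ 0 ∧ ∃ ηu, ηu ∈ Hu ∧ ηu ≠ 0 ∧
    θ = InnerProductGeometry.angle ηs ηu}

set_option maxHeartbeats 1000000 in
/-- Let C : ℝ^d → V be an invertible linear map whose inverse maps H_s, H_u
(with V = H_s ⊕ H_u) to orthogonal subspaces and satisfies |C⁻¹η| ≥ √2|η| on H_s ∪ H_u.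
Then for unit vectors η_s ∈ H_s, η_u ∈ H_u with cos ∠(η_s, η_u) ≥ 0, the unit vector
ζ = (η_s − η_u)/|η_s − η_u| satisfies |C⁻¹ζ|² ≥ 1/sin²∠(η_s, η_u); in particular
‖C⁻¹‖ ≥ 1/sin ∠(H_s, H_u). -/
theorem inv_norm_ge_inv_sin_angle {d : ℕ} {V : Type*} [NormedAddCommGroup V]
    [InnerProductSpace ℝ V] [FiniteDimensional ℝ V]
    (C : EuclideanSpace ℝ (Fin d) ≃ₗ[ℝ] V)
    (Hs Hu : Submodule ℝ V) (hcompl : IsCompl Hs Hu) (hs : Hs ≠ ⊥) (hu : Hu ≠ ⊥)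
    (horth : ∀ ηs ∈ Hs, ∀ ηu ∈ Hu, ⟪C.symm ηs, C.symm ηu⟫ = 0)
    (hns : ∀ η ∈ Hs, Real.sqrt 2 * ‖η‖ ≤ ‖C.symm η‖)
    (hnu : ∀ η ∈ Hu, Real.sqrt 2 * ‖η‖ ≤ ‖C.symm η‖) :
    (∀ ηs ∈ Hs, ∀ ηu ∈ Hu, ‖ηs‖ = 1 → ‖ηu‖ = 1 →
      0 ≤ Real.cos (InnerProductGeometry.angle ηs ηu) →
      1 / (Real.sin (InnerProductGeometry.angle ηs ηu)) ^ 2 ≤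
        ‖C.symm ((‖ηs - ηu‖)⁻¹ • (ηs - ηu))‖ ^ 2) ∧
    1 / Real.sin (minAngle Hs Hu) ≤
      ‖LinearMap.toContinuousLinearMap (C.symm.toLinearMap)‖ := by
  have hnodup : ∀ x ∈ Hs, ∀ y ∈ Hu, x ≠ 0 → x ≠ y := by
    intro x hx y hy hx0 h
    have hmem : x ∈ Hs ⊓ Hu := ⟨hx, h ▸ hy⟩
    rw [hcompl.inf_eq_bot, Submodule.mem_bot] at hmem
    exact hx0 hmem
  have key : ∀ ηs ∈ Hs, ∀ ηu ∈ Hu, ‖ηs‖ = 1 → ‖ηu‖ = 1 →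
      0 ≤ Real.cos (InnerProductGeometry.angle ηs ηu) →
      1 / (Real.sin (InnerProductGeometry.angle ηs ηu)) ^ 2 ≤
        ‖C.symm ((‖ηs - ηu‖)⁻¹ • (ηs - ηu))‖ ^ 2 := by
    intro ηs hηs ηu hηu h1 h2 hcos
    set θ := InnerProductGeometry.angle ηs ηu with hθ
    have hne : ηs ≠ ηu := hnodup _ hηs _ hηu (by intro h; rw [h] at h1; simp at h1)
    have hcosval : Real.cos θ = ⟪ηs, ηu⟫ := by
      rw [hθ, InnerProductGeometry.cos_angle, h1, h2]; ring
    have hcoslt : Real.cos θ < 1 := by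
      rcases lt_or_eq_of_le (Real.cos_le_one θ) with h | h
      · exact h
      · exact absurd ((inner_eq_one_iff_of_norm_eq_one h1 h2).1 (by rw [← hcosval, h])) hne
    have hsub : ‖ηs - ηu‖ ^ 2 = 2 - 2 * Real.cos θ := by
      rw [norm_sub_sq_real, h1, h2, hcosval]; ring
    have hsubpos : 0 < ‖ηs - ηu‖ := norm_pos_iff.2 (sub_ne_zero_of_ne hne)
    have hsin : Real.sin θ ^ 2 = (1 - Real.cos θ) * (1 + Real.cos θ) := by
      have := Real.sin_sq_add_cos_sq θ; nlinarith
    have ho : ⟪C.symm ηs, C.symm ηu⟫ = 0 := horth _ hηs _ hηu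
    have hsq2 : (Real.sqrt 2) ^ 2 = 2 := Real.sq_sqrt (by norm_num)
    have ha : (2:ℝ) ≤ ‖C.symm ηs‖ ^ 2 := by
      have h := hns _ hηs; rw [h1, mul_one] at h
      nlinarith [Real.sqrt_nonneg 2, norm_nonneg (C.symm ηs)]
    have hb : (2:ℝ) ≤ ‖C.symm ηu‖ ^ 2 := by
      have h := hnu _ hηu; rw [h2, mul_one] at h
      nlinarith [Real.sqrt_nonneg 2, norm_nonneg (C.symm ηu)]
    have hab : (4:ℝ) ≤ ‖C.symm ηs - C.symm ηu‖ ^ 2 := by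
      rw [norm_sub_sq_real, ho]; nlinarith
    have himg : ‖C.symm ((‖ηs - ηu‖)⁻¹ • (ηs - ηu))‖ ^ 2
        = ‖C.symm ηs - C.symm ηu‖ ^ 2 / ‖ηs - ηu‖ ^ 2 := by
      rw [map_smul, norm_smul, norm_inv, norm_norm, map_sub]
      field_simp
    rw [himg, hsin]
    rw [div_le_div_iff₀ (by nlinarith) (by positivity)]
    nlinarith [mul_nonneg hcos (sub_nonneg.2 hcoslt.le),
      mul_nonneg (sub_nonneg.2 hcoslt.le) hcos, sq_nonneg (Real.cos θ)]
  refine ⟨key, ?_⟩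
  set T := LinearMap.toContinuousLinearMap (C.symm.toLinearMap) with hT
  set N := ‖T‖ with hN
  have hTapp : ∀ v : V, T v = C.symm v := fun v => by
    rw [hT, LinearMap.coe_toContinuousLinearMap']; rfl
  obtain ⟨xs, hxs, hxs0⟩ := Submodule.exists_mem_ne_zero_of_ne_bot hs
  obtain ⟨xu, hxu, hxu0⟩ := Submodule.exists_mem_ne_zero_of_ne_bot hu
  have hN2 : Real.sqrt 2 ≤ N := by
    have h := hns xs hxs
    have hle : ‖T xs‖ ≤ N * ‖xs‖ := T.le_opNorm xs
    rw [hTapp] at hle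
    have hxpos : 0 < ‖xs‖ := norm_pos_iff.2 hxs0
    nlinarith
  have h1N : (1:ℝ) ≤ N := le_trans (by
    rw [show (1:ℝ) = Real.sqrt 1 by simp]
    exact Real.sqrt_le_sqrt (by norm_num)) hN2
  have hNpos : (0:ℝ) < N := lt_of_lt_of_le one_pos h1N
  set S := {θ : ℝ | ∃ ηs, ηs ∈ Hs ∧ ηs ≠ 0 ∧ ∃ ηu, ηu ∈ Hu ∧ ηu ≠ 0 ∧
    θ = InnerProductGeometry.angle ηs ηu} with hSdef
  set α := Real.arcsin (1 / N) with hα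
  have hbound : ∀ θ ∈ S, α ≤ θ := by
    rintro θ ⟨a, ha, ha0, b, hb, hb0, rfl⟩
    have hapos : (0:ℝ) < ‖a‖⁻¹ := inv_pos.2 (norm_pos_iff.2 ha0)
    have hbpos : (0:ℝ) < ‖b‖⁻¹ := inv_pos.2 (norm_pos_iff.2 hb0)
    set us := ‖a‖⁻¹ • a with hus
    set uu := ‖b‖⁻¹ • b with huu
    have husmem : us ∈ Hs := Hs.smul_mem _ ha
    have huumem : uu ∈ Hu := Hu.smul_mem _ hb
    have hus1 : ‖us‖ = 1 := norm_smul_inv_norm ha0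
    have huu1 : ‖uu‖ = 1 := norm_smul_inv_norm hb0
    have hangle : InnerProductGeometry.angle a b = InnerProductGeometry.angle us uu := by
      rw [hus, huu, InnerProductGeometry.angle_smul_left_of_pos _ _ hapos,
        InnerProductGeometry.angle_smul_right_of_pos _ _ hbpos]
    set θ := InnerProductGeometry.angle us uu with hθ
    rw [hangle]
    have hθ0 : 0 ≤ θ := InnerProductGeometry.angle_nonneg _ _
    have hθpi : θ ≤ Real.pi := InnerProductGeometry.angle_le_pi _ _
    by_cases hcos : 0 ≤ Real.cos θ
    · -- θ ≤ π/2
      have hθhalf : θ ≤ Real.pi / 2 := by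
        by_contra h
        push_neg at h
        have := Real.cos_neg_of_pi_div_two_lt_of_lt h
          (by linarith [Real.pi_pos])
        linarith
      have hθne0 : θ ≠ 0 := by
        intro h
        rw [hθ] at h
        obtain ⟨-, r, hr, hru⟩ := InnerProductGeometry.angle_eq_zero_iff.1 h
        have huu0 : uu ≠ 0 := by intro h0; rw [h0] at huu1; simp at huu1
        have huuHs : uu ∈ Hs := hru ▸ Hs.smul_mem r husmem
        exact hnodup _ huuHs _ huumem huu0 rfl
      have hsinpos : 0 < Real.sin θ :=
        Real.sin_pos_of_pos_of_lt_pi (lt_of_le_of_ne hθ0 (Ne.symm hθne0))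
          (lt_of_le_of_lt hθhalf (by linarith [Real.pi_pos]))
      have hkey := key us husmem uu huumem hus1 huu1 hcos
      have hζ1 : ‖(‖us - uu‖)⁻¹ • (us - uu)‖ = 1 :=
        norm_smul_inv_norm (sub_ne_zero_of_ne
          (hnodup _ husmem _ huumem (by intro h; rw [h] at hus1; simp at hus1)))
      have hζle : ‖C.symm ((‖us - uu‖)⁻¹ • (us - uu))‖ ≤ N := by
        have := T.le_opNorm ((‖us - uu‖)⁻¹ • (us - uu))
        rw [hTapp, hζ1, mul_one] at this
        exact this
      have hinvsq : 1 / Real.sin θ ^ 2 ≤ N ^ 2 := by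
        refine le_trans hkey ?_
        have h0 : 0 ≤ ‖C.symm ((‖us - uu‖)⁻¹ • (us - uu))‖ := norm_nonneg _
        nlinarith
      have hsinge : 1 / N ≤ Real.sin θ := by
        rw [div_le_iff₀ hNpos]
        have h1 : 1 ≤ N ^ 2 * Real.sin θ ^ 2 := by
          rw [div_le_iff₀ (by positivity)] at hinvsq
          linarith
        nlinarith [mul_pos hNpos hsinpos]
      calc α ≤ Real.arcsin (Real.sin θ) := Real.monotone_arcsin hsinge
        _ = θ := Real.arcsin_sin (by linarith [Real.pi_pos]) hθhalf
    · push_neg at hcos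
      have hθhalf : Real.pi / 2 ≤ θ := by
        by_contra h
        push_neg at h
        exact absurd (Real.cos_nonneg_of_neg_pi_div_two_le_of_le
          (by linarith [Real.pi_pos]) h.le) (not_le.2 hcos)
      exact le_trans (Real.arcsin_le_pi_div_two _) hθhalf
  have hSne : S.Nonempty :=
    ⟨InnerProductGeometry.angle xs xu, xs, hxs, hxs0, xu, hxu, hxu0, rfl⟩
  have hbdd : BddBelow S := ⟨0, by
    rintro θ ⟨a, _, _, b, _, _, rfl⟩
    exact InnerProductGeometry.angle_nonneg _ _⟩
  have hinf_ge : α ≤ sInf S := le_csInf hSne hbound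
  have hinf_le : sInf S ≤ Real.pi / 2 := by
    set θ₀ := InnerProductGeometry.angle xs xu with hθ₀
    by_cases h : θ₀ ≤ Real.pi / 2
    · exact le_trans (csInf_le hbdd ⟨xs, hxs, hxs0, xu, hxu, hxu0, rfl⟩) h
    · push_neg at h
      have hmem : Real.pi - θ₀ ∈ S := by
        refine ⟨xs, hxs, hxs0, -xu, hxu |> Hu.neg_mem, neg_ne_zero.2 hxu0, ?_⟩
        rw [InnerProductGeometry.angle_neg_right]
      exact le_trans (csInf_le hbdd hmem) (by linarith)
  have hαhalf : -(Real.pi / 2) ≤ α := Real.neg_pi_div_two_le_arcsin _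
  have h1Nmem : (1:ℝ)/N ≤ 1 := by
    rw [div_le_one hNpos]; exact h1N
  have h1Npos : (0:ℝ) < 1/N := by positivity
  have hsinα : Real.sin α = 1/N := Real.sin_arcsin (by linarith) h1Nmem
  have hsinmono : Real.sin α ≤ Real.sin (sInf S) := by
    rcases eq_or_lt_of_le hinf_ge with h | h
    · rw [h]
    · exact (Real.strictMonoOn_sin ⟨hαhalf, Real.arcsin_le_pi_div_two _⟩
        ⟨by linarith, hinf_le⟩ h).le
  have hsinInf : 1/N ≤ Real.sin (sInf S) := by rw [← hsinα]; exact hsinmono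
  have hsinInfpos : 0 < Real.sin (sInf S) := lt_of_lt_of_le h1Npos hsinInf
  have : 1 / Real.sin (sInf S) ≤ 1 / (1/N) :=
    one_div_le_one_div_of_le h1Npos hsinInf
  rw [one_div_one_div] at this
  exact this
end

section
/- Let χ > 0, 0 < ε, and let (a_n)_{n ≥ 0}, (p_n)_{n ≥ 0} be positive sequences satisfying: a_{n+1} = e^{−χ/2} a_n + 4ε p_{n+1}, p_n ≤ e^{ε} p_{n+1}, and p_n ≥ e^{−εn} p₀ for all n. Suppose e^{−ε} > e^{−χ/2} + 16ε. Then there exists n with a_n < ¼ p_n; moreover, if in addition e^{−χ/2}·¼ + 4ε ≤ ¼·e^{−ε}, then once a_n < ¼ p_n holds, it holds for all larger n. -/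
/-- For positive sequences with a_{n+1} = e^{−χ/2} a_n + 4ε p_{n+1},
p_n ≤ e^{ε} p_{n+1}, p_n ≥ e^{−εn} p₀ and e^{−ε} > e^{−χ/2} + 16ε, some n has
a_n < ¼ p_n; moreover (when also e^{−χ/2}·¼ + 4ε ≤ ¼ e^{−ε}) this persists. -/
theorem eventually_quarter (χ ε : ℝ) (hχ : 0 < χ) (hε : 0 < ε)
    (a p : ℕ → ℝ) (hapos : ∀ n, 0 < a n) (hppos : ∀ n, 0 < p n)
    (hrec : ∀ n, a (n + 1) = Real.exp (-(χ / 2)) * a n + 4 * ε * p (n + 1))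
    (hp1 : ∀ n, p n ≤ Real.exp ε * p (n + 1))
    (hp2 : ∀ n : ℕ, Real.exp (-(ε * (n : ℝ))) * p 0 ≤ p n)
    (hgap : Real.exp (-(χ / 2)) + 16 * ε < Real.exp (-ε))
    (hsmall : Real.exp (-(χ / 2)) * (1 / 4) + 4 * ε ≤ (1 / 4) * Real.exp (-ε)) :
    (∃ n, a n < (1 / 4) * p n) ∧
    ∀ n, a n < (1 / 4) * p n → a (n + 1) < (1 / 4) * p (n + 1) := by
  set E := Real.exp (-(χ / 2)) with hE
  have hEpos : 0 < E := Real.exp_pos _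
  have heε : (1 : ℝ) ≤ Real.exp ε := Real.one_le_exp hε.le
  have hmul : Real.exp (-ε) * Real.exp ε = 1 := by
    rw [← Real.exp_add]; simp
  have he1 : Real.exp (-ε) < 1 := by
    rw [← Real.exp_zero]; exact Real.exp_lt_exp.mpr (by linarith)
  have h16 : 16 * ε < 1 := by nlinarith
  constructor
  · by_contra hcon
    push_neg at hcon
    -- geometric decay
    have hstep : ∀ n, a (n + 1) ≤ (E / (1 - 16 * ε)) * a n := by
      intro n
      have h1 := hrec n
      have h2 := hcon (n + 1)
      have h3 : 4 * ε * p (n + 1) ≤ 16 * ε * a (n + 1) := by nlinarith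
      rw [div_mul_eq_mul_div, le_div_iff₀ (by linarith : (0:ℝ) < 1 - 16 * ε)]
      nlinarith
    set q := E / (1 - 16 * ε) with hq
    have hqpos : 0 < q := div_pos hEpos (by linarith)
    have hgeo : ∀ n, a n ≤ q ^ n * a 0 := by
      intro n
      induction n with
      | zero => simp
      | succ n ih =>
        calc a (n + 1) ≤ q * a n := hstep n
        _ ≤ q * (q ^ n * a 0) := by nlinarith
        _ = q ^ (n + 1) * a 0 := by ring
    set r := q * Real.exp ε with hr
    have hrpos : 0 < r := mul_pos hqpos (Real.exp_pos _)
    have hr1 : r < 1 := by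
      rw [hr, hq, div_mul_eq_mul_div, div_lt_one (by linarith : (0:ℝ) < 1 - 16 * ε)]
      nlinarith
    have hlow : ∀ n : ℕ, (1 / 4) * p 0 ≤ r ^ n * a 0 := by
      intro n
      have h1 : (1 / 4) * (Real.exp (-(ε * n)) * p 0) ≤ a n := by
        have := hp2 n
        have := hcon n
        nlinarith [hppos 0]
      have h2 : (1 / 4) * (Real.exp (-(ε * n)) * p 0) ≤ q ^ n * a 0 :=
        h1.trans (hgeo n)
      have h3 := mul_le_mul_of_nonneg_right h2 (Real.exp_pos (ε * n)).le
      have hexp : Real.exp (-(ε * n)) * Real.exp (ε * n) = 1 := by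
        rw [← Real.exp_add]; simp
      have hpow : Real.exp (ε * n) = (Real.exp ε) ^ n := by
        rw [← Real.exp_nat_mul]; ring_nf
      calc (1/4) * p 0 = (1/4) * (Real.exp (-(ε * n)) * p 0) * Real.exp (ε * n) := by
            linear_combination (-(1/4) * p 0) * hexp
        _ ≤ q ^ n * a 0 * Real.exp (ε * n) := h3
        _ = r ^ n * a 0 := by rw [hr, mul_pow, hpow]; ring
    obtain ⟨n, hn⟩ := exists_pow_lt_of_lt_one
      (div_pos (by nlinarith [hppos 0] : (0:ℝ) < (1/4) * p 0) (hapos 0)) hr1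
    have := hlow n
    rw [lt_div_iff₀ (hapos 0)] at hn
    linarith
  · intro n h
    have h1 := hrec n
    have h2 := hp1 n
    have hkey : E * (1 / 4) * Real.exp ε + 4 * ε ≤ 1 / 4 := by
      have := mul_le_mul_of_nonneg_right hsmall (Real.exp_pos ε).le
      nlinarith
    have hp := hppos (n + 1)
    nlinarith [mul_le_mul_of_nonneg_left h2 (mul_pos hEpos (by norm_num : (0:ℝ) < 1/4)).le]
end

section
/- Let I_ε = {e^{−ℓε/3} : ℓ ∈ ℕ} and let (Q_k)_{k∈ℤ} ⊂ I_ε. Suppose q_k ∈ I_ε satisfy 0 < q_k ≤ Q_k and e^{−ε} ≤ q_k/q_{k+1} ≤ e^{ε} for all k ∈ ℤ. Then there exists a sequence of pairs {(p_k^s, p_k^u)}_{k∈ℤ} which is ε-subordinated to (Q_k) — i.e. p_k^s, p_k^u ∈ I_ε, 0 < p_k^s, p_k^u ≤ Q_k, p_{k+1}^u = min{e^{ε} p_k^u, Q_{k+1}} and p_{k−1}^s = min{e^{ε} p_k^s, Q_{k−1}} — such that p_k^s ∧ p_k^u ≥ q_k for all k ∈ ℤ. -/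
/-- The discrete grid I_ε = {e^{−ℓε/3} : ℓ ∈ ℕ}. -/
def Igrid (ε : ℝ) : Set ℝ := {x : ℝ | ∃ ℓ : ℕ, x = Real.exp (-((ℓ : ℝ) * ε / 3))}

/-- Given (Q_k) ⊂ I_ε and q_k ∈ I_ε with 0 < q_k ≤ Q_k and
e^{−ε} ≤ q_k/q_{k+1} ≤ e^{ε}, there is a sequence {(p_k^s, p_k^u)} ε-subordinated to (Q_k)
with p_k^s ∧ p_k^u ≥ q_k for all k ∈ ℤ. -/
theorem exists_subordinated (ε : ℝ) (hε : 0 < ε) (Q q : ℤ → ℝ)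
    (hQ : ∀ k, Q k ∈ Igrid ε) (hq : ∀ k, q k ∈ Igrid ε)
    (hqpos : ∀ k, 0 < q k) (hqQ : ∀ k, q k ≤ Q k)
    (hratio : ∀ k, Real.exp (-ε) ≤ q k / q (k + 1) ∧ q k / q (k + 1) ≤ Real.exp ε) :
    ∃ ps pu : ℤ → ℝ,
      (∀ k, ps k ∈ Igrid ε ∧ pu k ∈ Igrid ε ∧
        0 < ps k ∧ ps k ≤ Q k ∧ 0 < pu k ∧ pu k ≤ Q k) ∧
      (∀ k, pu (k + 1) = min (Real.exp ε * pu k) (Q (k + 1))) ∧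
      (∀ k, ps (k - 1) = min (Real.exp ε * ps k) (Q (k - 1))) ∧
      (∀ k, q k ≤ min (ps k) (pu k)) := by
  have hc : (0:ℝ) < ε / 3 := by linarith
  choose L hL using hQ
  choose M hM using hq
  -- basic translation
  have key : ∀ x y : ℝ, Real.exp (-(x * ε / 3)) ≤ Real.exp (-(y * ε / 3)) ↔ y ≤ x := by
    intro x y
    rw [Real.exp_le_exp]
    constructor <;> intro h <;> nlinarith
  -- L k ≤ M k
  have hLM : ∀ k, (L k : ℤ) ≤ (M k : ℤ) := by
    intro k
    have h := hqQ k
    rw [hL k, hM k] at h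
    have h' : ((L k : ℝ)) ≤ (M k : ℝ) := (key _ _).mp h
    exact_mod_cast h'
  -- step bounds on M
  have hstep : ∀ k, (M k : ℤ) - 3 ≤ (M (k+1) : ℤ) ∧ (M (k+1) : ℤ) ≤ (M k : ℤ) + 3 := by
    intro k
    obtain ⟨h1, h2⟩ := hratio k
    have hdiv : q k / q (k+1) = Real.exp (((M (k+1) : ℝ) - (M k : ℝ)) * ε / 3) := by
      rw [hM k, hM (k+1), ← Real.exp_sub]
      congr 1
      ring
    rw [hdiv, Real.exp_le_exp] at h1 h2
    constructor
    · have : ((M k : ℝ)) - 3 ≤ (M (k+1) : ℝ) := by nlinarith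
      exact_mod_cast this
    · have : ((M (k+1) : ℝ)) ≤ (M k : ℝ) + 3 := by nlinarith
      exact_mod_cast this
  -- iterated step bounds
  have hMdown : ∀ (k : ℤ) (j : ℕ), (M (k - j) : ℤ) ≤ (M k : ℤ) + 3 * j := by
    intro k j
    induction j with
    | zero => simp
    | succ n ih =>
      have e0 : k - ((n+1 : ℕ) : ℤ) = (k - n) - 1 := by push_cast; ring
      rw [e0]
      have h := (hstep (k - (n:ℤ) - 1)).1
      rw [show (k - (n:ℤ) - 1) + 1 = k - n from by ring] at h
      push_cast
      omega
  have hMup : ∀ (k : ℤ) (j : ℕ), (M (k + j) : ℤ) ≤ (M k : ℤ) + 3 * j := by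
    intro k j
    induction j with
    | zero => simp
    | succ n ih =>
      have e0 : k + ((n+1 : ℕ) : ℤ) = (k + n) + 1 := by push_cast; ring
      rw [e0]
      have h := (hstep (k + n)).2
      push_cast
      omega
  -- the exponent sets
  set Su : ℤ → Set ℤ := fun k => Set.range (fun j : ℕ => (L (k - j) : ℤ) - 3 * j) with hSu
  set Ss : ℤ → Set ℤ := fun k => Set.range (fun j : ℕ => (L (k + j) : ℤ) - 3 * j) with hSs
  have hSu_mem : ∀ (k : ℤ) (j : ℕ), (L (k - j) : ℤ) - 3 * j ∈ Su k := fun k j => ⟨j, rfl⟩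
  have hSs_mem : ∀ (k : ℤ) (j : ℕ), (L (k + j) : ℤ) - 3 * j ∈ Ss k := fun k j => ⟨j, rfl⟩
  have hSu_ne : ∀ k, (Su k).Nonempty := fun k => ⟨_, hSu_mem k 0⟩
  have hSs_ne : ∀ k, (Ss k).Nonempty := fun k => ⟨_, hSs_mem k 0⟩
  have hSu_bdd : ∀ k, BddAbove (Su k) := by
    intro k
    refine ⟨(M k : ℤ), ?_⟩
    rintro x ⟨j, rfl⟩
    have h1 := hLM (k - j)
    have h2 := hMdown k j
    dsimp only
    omega
  have hSs_bdd : ∀ k, BddAbove (Ss k) := by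
    intro k
    refine ⟨(M k : ℤ), ?_⟩
    rintro x ⟨j, rfl⟩
    have h1 := hLM (k + j)
    have h2 := hMup k j
    dsimp only
    omega
  set a : ℤ → ℤ := fun k => sSup (Su k) with ha
  set b : ℤ → ℤ := fun k => sSup (Ss k) with hb
  have haL : ∀ k, (L k : ℤ) ≤ a k := by
    intro k
    have h := le_csSup (hSu_bdd k) (hSu_mem k 0)
    simpa using h
  have hbL : ∀ k, (L k : ℤ) ≤ b k := by
    intro k
    have h := le_csSup (hSs_bdd k) (hSs_mem k 0)
    simpa using h
  have haM : ∀ k, a k ≤ (M k : ℤ) := by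
    intro k
    apply csSup_le (hSu_ne k)
    rintro x ⟨j, rfl⟩
    have h1 := hLM (k - j)
    have h2 := hMdown k j
    dsimp only
    omega
  have hbM : ∀ k, b k ≤ (M k : ℤ) := by
    intro k
    apply csSup_le (hSs_ne k)
    rintro x ⟨j, rfl⟩
    have h1 := hLM (k + j)
    have h2 := hMup k j
    dsimp only
    omega
  -- recursions
  have harec : ∀ k, a (k + 1) = max (a k - 3) ((L (k+1) : ℤ)) := by
    intro k
    apply le_antisymm
    · apply csSup_le (hSu_ne (k+1))
      rintro x ⟨j, rfl⟩
      dsimp only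
      match j with
      | 0 => simp
      | Nat.succ n =>
        have e1 : k + 1 - ((n+1 : ℕ) : ℤ) = k - n := by push_cast; ring
        have h : (L (k - n) : ℤ) - 3 * n ≤ a k := le_csSup (hSu_bdd k) (hSu_mem k n)
        rw [le_max_iff]
        left
        rw [e1]
        push_cast
        push_cast at h
        omega
    · rw [max_le_iff]
      constructor
      · have h3 : a k ≤ a (k+1) + 3 := by
          apply csSup_le (hSu_ne k)
          rintro x ⟨j, rfl⟩
          have e1 : k - (j : ℤ) = k + 1 - ((j+1 : ℕ) : ℤ) := by push_cast; ring
          have h : (L (k + 1 - ((j+1:ℕ) : ℤ)) : ℤ) - 3 * ((j+1:ℕ)) ≤ a (k+1) :=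
            le_csSup (hSu_bdd (k+1)) (hSu_mem (k+1) (j+1))
          dsimp only
          rw [e1]
          push_cast at h ⊢
          omega
        omega
      · have h := le_csSup (hSu_bdd (k+1)) (hSu_mem (k+1) 0)
        simpa using h
  have hbrec : ∀ k, b (k - 1) = max (b k - 3) ((L (k-1) : ℤ)) := by
    intro k
    apply le_antisymm
    · apply csSup_le (hSs_ne (k-1))
      rintro x ⟨j, rfl⟩
      dsimp only
      match j with
      | 0 => simp
      | Nat.succ n =>
        have e1 : k - 1 + ((n+1 : ℕ) : ℤ) = k + n := by push_cast; ring
        have h : (L (k + n) : ℤ) - 3 * n ≤ b k := le_csSup (hSs_bdd k) (hSs_mem k n)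
        rw [le_max_iff]
        left
        rw [e1]
        push_cast
        push_cast at h
        omega
    · rw [max_le_iff]
      constructor
      · have h3 : b k ≤ b (k-1) + 3 := by
          apply csSup_le (hSs_ne k)
          rintro x ⟨j, rfl⟩
          have e1 : k + (j : ℤ) = k - 1 + ((j+1 : ℕ) : ℤ) := by push_cast; ring
          have h : (L (k - 1 + ((j+1:ℕ) : ℤ)) : ℤ) - 3 * ((j+1:ℕ)) ≤ b (k-1) :=
            le_csSup (hSs_bdd (k-1)) (hSs_mem (k-1) (j+1))
          dsimp only
          rw [e1]
          push_cast at h ⊢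
          omega
        omega
      · have h := le_csSup (hSs_bdd (k-1)) (hSs_mem (k-1) 0)
        simpa using h
  -- the real sequences
  refine ⟨fun k => Real.exp (-((b k : ℝ) * ε / 3)), fun k => Real.exp (-((a k : ℝ) * ε / 3)),
    ?_, ?_, ?_, ?_⟩
  · intro k
    have ha0 : (0:ℤ) ≤ a k := le_trans (by exact_mod_cast Nat.zero_le (L k)) (haL k)
    have hb0 : (0:ℤ) ≤ b k := le_trans (by exact_mod_cast Nat.zero_le (L k)) (hbL k)
    have hbcast : (((b k).toNat : ℕ) : ℝ) = ((b k : ℤ) : ℝ) := by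
      exact_mod_cast Int.toNat_of_nonneg hb0
    have hacast : (((a k).toNat : ℕ) : ℝ) = ((a k : ℤ) : ℝ) := by
      exact_mod_cast Int.toNat_of_nonneg ha0
    refine ⟨⟨(b k).toNat, by rw [hbcast]⟩, ⟨(a k).toNat, by rw [hacast]⟩,
      Real.exp_pos _, ?_, Real.exp_pos _, ?_⟩
    · rw [hL k]
      exact (key _ _).mpr (by exact_mod_cast hbL k)
    · rw [hL k]
      exact (key _ _).mpr (by exact_mod_cast haL k)
  · intro k
    dsimp only
    rw [harec k, hL (k+1)]
    have e1 : Real.exp ε * Real.exp (-((a k : ℝ) * ε / 3))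
        = Real.exp (-((((a k - 3 : ℤ)) : ℝ) * ε / 3)) := by
      rw [← Real.exp_add]
      congr 1
      push_cast
      ring
    rw [e1]
    rcases le_total (a k - 3) ((L (k+1) : ℤ)) with h | h
    · rw [max_eq_right h, min_eq_right ((key _ _).mpr (by exact_mod_cast h))]
      norm_cast
    · rw [max_eq_left h, min_eq_left ((key _ _).mpr (by exact_mod_cast h))]
  · intro k
    dsimp only
    rw [hbrec k, hL (k-1)]
    have e1 : Real.exp ε * Real.exp (-((b k : ℝ) * ε / 3))
        = Real.exp (-((((b k - 3 : ℤ)) : ℝ) * ε / 3)) := by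
      rw [← Real.exp_add]
      congr 1
      push_cast
      ring
    rw [e1]
    rcases le_total (b k - 3) ((L (k-1) : ℤ)) with h | h
    · rw [max_eq_right h, min_eq_right ((key _ _).mpr (by exact_mod_cast h))]
      norm_cast
    · rw [max_eq_left h, min_eq_left ((key _ _).mpr (by exact_mod_cast h))]
  · intro k
    rw [le_min_iff, hM k]
    exact ⟨(key _ _).mpr (by exact_mod_cast hbM k), (key _ _).mpr (by exact_mod_cast haM k)⟩
end

section
/- Let {(p_k^s, p_k^u)}_{k∈ℤ} be ε-subordinated to a sequence (Q_k)_{k∈ℤ} ⊂ I_ε (i.e. p_k^s, p_k^u ∈ I_ε with p_k^s, p_k^u ≤ Q_k, p_{k+1}^u = min{e^{ε} p_k^u, Q_{k+1}} and p_{k−1}^s = min{e^{ε} p_k^s, Q_{k−1}}). If limsup_{n→+∞} (p_n^s ∧ p_n^u) > 0 and limsup_{n→−∞} (p_n^s ∧ p_n^u) > 0, then p_n^u = Q_n for infinitely many n > 0 and for infinitely many n < 0, and likewise p_n^s = Q_n for infinitely many n > 0 and infinitely many n < 0. -/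
/-- If `f` satisfies the forward min-recursion, is positive, bounded by `Q ≤ 1`,
then `f n = Q n` for infinitely many positive `n` (else `f` grows geometrically). -/
lemma grow_aux (ε : ℝ) (hε : 0 < ε) (Q f : ℤ → ℝ)
    (hpos : ∀ k, 0 < f k) (hle : ∀ k, f k ≤ Q k) (hQ1 : ∀ k, Q k ≤ 1)
    (hrec : ∀ k, f (k + 1) = min (Real.exp ε * f k) (Q (k + 1))) :
    {n : ℤ | 0 < n ∧ f n = Q n}.Infinite := by
  by_contra hfin
  rw [Set.not_infinite] at hfin
  obtain ⟨B, hB⟩ := hfin.bddAbove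
  set N : ℤ := max B 0 + 1 with hN
  have hN0 : 0 < N := by simp [hN]
  have hne : ∀ n : ℤ, N ≤ n → f n ≠ Q n := by
    intro n hn heq
    have : n ≤ B := hB ⟨lt_of_lt_of_le hN0 hn, heq⟩
    omega
  have key : ∀ m : ℕ, f (N + m) = Real.exp ε ^ m * f N := by
    intro m
    induction m with
    | zero => simp
    | succ m ih =>
      have h1 : (N + (m + 1 : ℕ) : ℤ) = (N + m) + 1 := by push_cast; ring
      have h2 := hrec (N + m)
      rcases min_choice (Real.exp ε * f (N + m)) (Q (N + m + 1)) with hc | hc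
      · rw [h1, h2, hc, ih, pow_succ]; ring
      · exfalso
        exact hne (N + m + 1) (by omega) (by rw [h2, hc])
  obtain ⟨m, hm⟩ := pow_unbounded_of_one_lt (y := Real.exp ε) (1 / f N)
    (by rw [← Real.exp_zero]; exact Real.exp_lt_exp.2 hε)
  have h1 : 1 < Real.exp ε ^ m * f N := by
    rw [div_lt_iff₀ (hpos N)] at hm; linarith
  have h2 : f (N + m) ≤ 1 := le_trans (hle _) (hQ1 _)
  rw [key m] at h2
  linarith

/-- If `f` satisfies the forward min-recursion, is positive, and hits `Q` only finitely
often at negative indices, then `f (-n)` decays geometrically, so any nonnegative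
sequence dominated by it has limsup ≤ 0. -/
lemma decay_aux (ε : ℝ) (hε : 0 < ε) (Q f : ℤ → ℝ)
    (hpos : ∀ k, 0 < f k) (hle : ∀ k, f k ≤ Q k)
    (hrec : ∀ k, f (k + 1) = min (Real.exp ε * f k) (Q (k + 1)))
    (g : ℕ → ℝ) (hg0 : ∀ n, 0 ≤ g n) (hgle : ∀ n, g n ≤ f (-(n : ℤ)))
    (hfin : {n : ℤ | n < 0 ∧ f n = Q n}.Finite) :
    Filter.limsup g Filter.atTop ≤ 0 := by
  obtain ⟨B, hB⟩ := hfin.bddBelow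
  set N : ℕ := B.natAbs + 1 with hNdef
  have hNB : -(N : ℤ) < B := by omega
  have hne : ∀ n : ℤ, n ≤ -(N : ℤ) → f n ≠ Q n := by
    intro n hn heq
    have hn0 : n < 0 := by omega
    have : B ≤ n := hB ⟨hn0, heq⟩
    omega
  have key : ∀ m : ℕ, f (-(N : ℤ) - m) = Real.exp (-ε) ^ m * f (-(N : ℤ)) := by
    intro m
    induction m with
    | zero => simp
    | succ m ih =>
      have h2 := hrec (-(N : ℤ) - (m + 1 : ℕ))
      have h3 : (-(N : ℤ) - (m + 1 : ℕ)) + 1 = -(N : ℤ) - m := by push_cast; ring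
      rw [h3] at h2
      rcases min_choice (Real.exp ε * f (-(N : ℤ) - (m + 1 : ℕ))) (Q (-(N : ℤ) - m)) with hc | hc
      · rw [hc] at h2
        have : f (-(N : ℤ) - (m + 1 : ℕ)) = Real.exp (-ε) * f (-(N : ℤ) - m) := by
          rw [h2, Real.exp_neg]
          field_simp
        rw [this, ih, pow_succ]; ring
      · exfalso
        exact hne (-(N : ℤ) - m) (by omega) (by rw [h2, hc])
  -- squeeze g to 0
  have htend : Filter.Tendsto g Filter.atTop (nhds 0) := by
    apply squeeze_zero' (Filter.Eventually.of_forall hg0)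
      (g := fun n : ℕ => Real.exp (-ε) ^ (n - N) * f (-(N : ℤ)))
    · filter_upwards [Filter.eventually_ge_atTop N] with n hn
      have hcast : -(n : ℤ) = -(N : ℤ) - ((n - N : ℕ) : ℤ) := by
        push_cast [Nat.cast_sub hn]; ring
      calc g n ≤ f (-(n : ℤ)) := hgle n
        _ = Real.exp (-ε) ^ (n - N) * f (-(N : ℤ)) := by rw [hcast, key]
    · have hr0 : (0 : ℝ) ≤ Real.exp (-ε) := (Real.exp_pos _).le
      have hr1 : Real.exp (-ε) < 1 := Real.exp_lt_one_iff.2 (by linarith)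
      have := ((tendsto_pow_atTop_nhds_zero_of_lt_one hr0 hr1).comp
        (Filter.tendsto_sub_atTop_nat N)).mul_const (f (-(N : ℤ)))
      simpa using this
  rw [htend.limsup_eq]

/-- If {(p_k^s, p_k^u)} is ε-subordinated to (Q_k) ⊂ I_ε and the limsups of
p_n^s ∧ p_n^u as n → ±∞ are positive, then p_n^u = Q_n (resp. p_n^s = Q_n) for infinitely
many n > 0 and infinitely many n < 0. -/
theorem subordinated_hits_Q (ε : ℝ) (hε : 0 < ε) (Q ps pu : ℤ → ℝ)
    (hQ : ∀ k, Q k ∈ Igrid ε)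
    (hmem : ∀ k, ps k ∈ Igrid ε ∧ pu k ∈ Igrid ε ∧
      0 < ps k ∧ ps k ≤ Q k ∧ 0 < pu k ∧ pu k ≤ Q k)
    (hu : ∀ k, pu (k + 1) = min (Real.exp ε * pu k) (Q (k + 1)))
    (hs : ∀ k, ps (k - 1) = min (Real.exp ε * ps k) (Q (k - 1)))
    (hlimPos : 0 < Filter.limsup (fun n : ℕ => min (ps (n : ℤ)) (pu (n : ℤ))) Filter.atTop)
    (hlimNeg : 0 < Filter.limsup (fun n : ℕ => min (ps (-(n : ℤ))) (pu (-(n : ℤ)))) Filter.atTop) :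
    {n : ℤ | 0 < n ∧ pu n = Q n}.Infinite ∧ {n : ℤ | n < 0 ∧ pu n = Q n}.Infinite ∧
    {n : ℤ | 0 < n ∧ ps n = Q n}.Infinite ∧ {n : ℤ | n < 0 ∧ ps n = Q n}.Infinite := by
  have hQ1 : ∀ k, Q k ≤ 1 := by
    intro k
    obtain ⟨ℓ, hℓ⟩ := hQ k
    rw [hℓ]
    exact Real.exp_le_one_iff.2 (neg_nonpos.2 (by positivity))
  -- ps composed with negation satisfies the forward recursion
  have hs' : ∀ k : ℤ, (fun n => ps (-n)) (k + 1) =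
      min (Real.exp ε * (fun n => ps (-n)) k) ((fun n => Q (-n)) (k + 1)) := by
    intro k
    have := hs (-k)
    simpa [show -k - 1 = -(k + 1) by ring] using this
  refine ⟨?_, ?_, ?_, ?_⟩
  · exact grow_aux ε hε Q pu (fun k => (hmem k).2.2.2.2.1) (fun k => (hmem k).2.2.2.2.2)
      hQ1 hu
  · by_contra hfin
    rw [Set.not_infinite] at hfin
    have := decay_aux ε hε Q pu (fun k => (hmem k).2.2.2.2.1) (fun k => (hmem k).2.2.2.2.2)
      hu (fun n : ℕ => min (ps (-(n : ℤ))) (pu (-(n : ℤ))))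
      (fun n => le_min ((hmem _).2.2.1).le ((hmem _).2.2.2.2.1).le)
      (fun n => min_le_right _ _) hfin
    linarith
  · by_contra hfin
    rw [Set.not_infinite] at hfin
    have hfin' : {n : ℤ | n < 0 ∧ ps (-n) = Q (-n)}.Finite := by
      have : {n : ℤ | n < 0 ∧ ps (-n) = Q (-n)} ⊆ (fun n => -n) '' {n : ℤ | 0 < n ∧ ps n = Q n} := by
        rintro n ⟨hn, heq⟩
        exact ⟨-n, ⟨by omega, heq⟩, by ring⟩
      exact ((hfin.image _).subset this)
    have := decay_aux ε hε (fun n => Q (-n)) (fun n => ps (-n))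
      (fun k => (hmem (-k)).2.2.1) (fun k => (hmem (-k)).2.2.2.1)
      hs' (fun n : ℕ => min (ps (n : ℤ)) (pu (n : ℤ)))
      (fun n => le_min ((hmem _).2.2.1).le ((hmem _).2.2.2.2.1).le)
      (fun n => by simpa using min_le_left (ps (n : ℤ)) (pu (n : ℤ))) hfin'
    linarith
  · have hinf : {n : ℤ | 0 < n ∧ ps (-n) = Q (-n)}.Infinite :=
      grow_aux ε hε (fun n => Q (-n)) (fun n => ps (-n))
        (fun k => (hmem (-k)).2.2.1) (fun k => (hmem (-k)).2.2.2.1)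
        (fun k => hQ1 (-k)) hs'
    have himg : (fun n : ℤ => -n) '' {n : ℤ | 0 < n ∧ ps (-n) = Q (-n)} ⊆
        {n : ℤ | n < 0 ∧ ps n = Q n} := by
      rintro m ⟨n, ⟨hn, heq⟩, rfl⟩
      exact ⟨show -n < 0 by omega, heq⟩
    exact Set.Infinite.mono himg (hinf.image (fun a _ b _ h => by omega))
end
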